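/- Let v : Fin 5 → ℂ be nonzero with ∑ i, v i = 0 and ∑ i, (v i)³ = 0 (a point of the Clebsch cubic surface). If the orbit {g • v : g ∈ G₂₀} contains no 8 pairwise non-proportional vectors (i.e. the projective G₂₀-orbit of the point [v] has fewer than 8 elements), then either v is a nonzero scalar multiple of P_k for some k ∈ {1,2,3,4}, or v is a nonzero scalar multiple of c^j • R_m for some j ∈ {0,…,4} and m ∈ {1,2,3}. (The only G₂₀-orbits of length < 8 on the Clebsch cubic are the length-4 orbit {P_k} and the three length-5 orbits {c^j • R_m}.) -/
import Mathlib


/-- The 5-cycle `(0 1 2 3 4)` on `Fin 5`, sending `i` to `i + 1 (mod 5)`. -/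
def c : Equiv.Perm (Fin 5) := finRotate 5

/-- The 4-cycle `(1 2 4 3)` on `Fin 5`, fixing `0`. -/
def d : Equiv.Perm (Fin 5) := ([1, 2, 4, 3] : List (Fin 5)).formPerm

/-- The group `G₂₀ ≅ C₅ ⋊ C₄` generated by `c` and `d`. -/
def G₂₀ : Subgroup (Equiv.Perm (Fin 5)) := Subgroup.closure {c, d}

/-- The linear action of a permutation `g` on vectors: `(g • v) i = v (g⁻¹ i)`. -/
def permSMul (g : Equiv.Perm (Fin 5)) (v : Fin 5 → ℂ) : Fin 5 → ℂ := fun i => v (g⁻¹ i)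

/-- The point `P_k`, `P_k i = ζ ^ (k * i)`. -/
def P (ζ : ℂ) (k : ℕ) : Fin 5 → ℂ := fun i => ζ ^ (k * (i : ℕ))

def R₁ : Fin 5 → ℂ := ![0, -1, 1, 1, -1]
def R₂ : Fin 5 → ℂ := ![0, -Complex.I, -1, 1, Complex.I]
def R₃ : Fin 5 → ℂ := ![0, Complex.I, -1, 1, -Complex.I]

/-- The three base points `R₁, R₂, R₃` of the three orbits of length 5. -/
def R : Fin 3 → Fin 5 → ℂ := ![R₁, R₂, R₃]

lemma pS_mul (g h : Equiv.Perm (Fin 5)) (v : Fin 5 → ℂ) :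
    permSMul (g * h) v = permSMul g (permSMul h v) := by
  funext i; simp [permSMul, mul_inv_rev, Equiv.Perm.mul_apply]

lemma pS_one (v : Fin 5 → ℂ) : permSMul 1 v = v := rfl

lemma pS_smul (g : Equiv.Perm (Fin 5)) (μ : ℂ) (v : Fin 5 → ℂ) :
    permSMul g (μ • v) = μ • permSMul g v := rfl

lemma pS_pow_eigen (g : Equiv.Perm (Fin 5)) (v : Fin 5 → ℂ) (lam : ℂ)
    (h : permSMul g v = lam • v) (n : ℕ) : permSMul (g ^ n) v = lam ^ n • v := by
  induction n with
  | zero => simp [pS_one]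
  | succ n ih =>
    rw [pow_succ, pS_mul, h, pS_smul, ih, pow_succ, smul_smul, mul_comm]

def glist : Fin 8 → Equiv.Perm (Fin 5)
  | 0 => 1 | 1 => c | 2 => c^2 | 3 => c^3 | 4 => c^4 | 5 => d | 6 => c*d | 7 => c^2*d

set_option maxRecDepth 4000 in
lemma bad_quot : ∀ a b : Fin 8, a ≠ b →
    (∃ k : Fin 5, k ≠ 0 ∧ (glist b)⁻¹ * glist a = c ^ (k : ℕ)) ∨
    (∃ i : Fin 5, ∃ e : Fin 2, (glist b)⁻¹ * glist a = c ^ (i : ℕ) * d ^ (2 * (e : ℕ) + 1)) := by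
  decide

set_option maxRecDepth 4000 in
lemma conj_exists : ∀ i : Fin 5, ∀ e : Fin 2, ∃ t : Fin 5,
    c ^ (i : ℕ) * d ^ (2 * (e : ℕ) + 1) = c ^ (t : ℕ) * d ^ (2 * (e : ℕ) + 1) * (c ^ (t : ℕ))⁻¹ := by
  decide

lemma eigen_c (ζ : ℂ) (hζ : IsPrimitiveRoot ζ 5) (v : Fin 5 → ℂ) (hv : v ≠ 0)
    (h1 : (∑ i, v i) = 0) (lam : ℂ) (h : permSMul c v = lam • v) :
    ∃ k ∈ Finset.Icc 1 4, ∃ μ : ℂ, μ ≠ 0 ∧ v = μ • P ζ k := by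
  have e : ∀ i : Fin 5, v (c⁻¹ i) = lam * v i := fun i => congrFun h i
  have e0 : v 4 = lam * v 0 := by have := e 0; rwa [show c⁻¹ (0:Fin 5) = 4 by decide] at this
  have e1 : v 0 = lam * v 1 := by have := e 1; rwa [show c⁻¹ (1:Fin 5) = 0 by decide] at this
  have e2 : v 1 = lam * v 2 := by have := e 2; rwa [show c⁻¹ (2:Fin 5) = 1 by decide] at this
  have e3 : v 2 = lam * v 3 := by have := e 3; rwa [show c⁻¹ (3:Fin 5) = 2 by decide] at this
  have e4 : v 3 = lam * v 4 := by have := e 4; rwa [show c⁻¹ (4:Fin 5) = 3 by decide] at this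
  have h4 : v 4 = lam * v 0 := e0
  have h3' : v 3 = lam ^ 2 * v 0 := by rw [e4, h4]; ring
  have h2' : v 2 = lam ^ 3 * v 0 := by rw [e3, h3']; ring
  have h1' : v 1 = lam ^ 4 * v 0 := by rw [e2, h2']; ring
  have hv0 : v 0 ≠ 0 := by
    intro h0
    have z1 : v 1 = 0 := by rw [h1', h0]; ring
    have z2 : v 2 = 0 := by rw [h2', h0]; ring
    have z3 : v 3 = 0 := by rw [h3', h0]; ring
    have z4 : v 4 = 0 := by rw [h4, h0]; ring
    apply hv
    funext i
    fin_cases i <;> simp only [Pi.zero_apply] <;> assumption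
  have h5 : lam ^ 5 = 1 := by
    have hx : (lam ^ 5 - 1) * v 0 = 0 := by linear_combination -e1 - lam * h1'
    rcases mul_eq_zero.mp hx with hx | hx
    · exact sub_eq_zero.mp hx
    · exact absurd hx hv0
  obtain ⟨a, ha5, hae⟩ := hζ.eq_pow_of_pow_eq_one h5
  have ha0 : a ≠ 0 := by
    rintro rfl
    have hl1 : lam = 1 := by simpa using hae.symm
    rw [hl1] at h1' h2' h3' h4
    have h50 : (5:ℂ) * v 0 = 0 := by
      rw [Fin.sum_univ_five] at h1
      linear_combination h1 - h1' - h2' - h3' - h4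
    exact hv0 (by linear_combination h50 / 5)
  have hzn : ∀ m n : ℕ, m % 5 = n % 5 → ζ ^ m = ζ ^ n := by
    intro m n hmn
    have hz5 : ζ ^ 5 = 1 := hζ.pow_eq_one
    rw [← Nat.div_add_mod m 5, ← Nat.div_add_mod n 5, pow_add, pow_add, pow_mul, pow_mul,
      hz5, one_pow, one_pow, hmn]
  refine ⟨5 - a, by simp only [Finset.mem_Icc]; omega, v 0, hv0, ?_⟩
  rw [← hae] at h1' h2' h3' h4
  funext i
  fin_cases i <;>
    simp only [Pi.smul_apply, smul_eq_mul, P, Fin.isValue]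
  · show v 0 = v 0 * ζ ^ ((5 - a) * 0)
    simp
  · show v 1 = v 0 * ζ ^ ((5 - a) * 1)
    rw [h1', ← pow_mul, mul_comm]
    congr 1
    exact hzn _ _ (by omega)
  · show v 2 = v 0 * ζ ^ ((5 - a) * 2)
    rw [h2', ← pow_mul, mul_comm]
    congr 1
    exact hzn _ _ (by omega)
  · show v 3 = v 0 * ζ ^ ((5 - a) * 3)
    rw [h3', ← pow_mul, mul_comm]
    congr 1
    exact hzn _ _ (by omega)
  · show v 4 = v 0 * ζ ^ ((5 - a) * 4)
    rw [h4, mul_comm]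
    congr 1
    exact hzn _ _ (by omega)

lemma eigen_d (u : Fin 5 → ℂ) (hu : u ≠ 0) (h1 : (∑ i, u i) = 0)
    (h3 : (∑ i, (u i) ^ 3) = 0) (lam : ℂ) (h : permSMul d u = lam • u) :
    ∃ m : Fin 3, ∃ μ : ℂ, μ ≠ 0 ∧ u = μ • R m := by
  have e : ∀ i : Fin 5, u (d⁻¹ i) = lam * u i := fun i => congrFun h i
  have e0 : u 0 = lam * u 0 := by have := e 0; rwa [show d⁻¹ (0:Fin 5) = 0 by decide] at this
  have e1 : u 3 = lam * u 1 := by have := e 1; rwa [show d⁻¹ (1:Fin 5) = 3 by decide] at this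
  have e2 : u 1 = lam * u 2 := by have := e 2; rwa [show d⁻¹ (2:Fin 5) = 1 by decide] at this
  have e3 : u 4 = lam * u 3 := by have := e 3; rwa [show d⁻¹ (3:Fin 5) = 4 by decide] at this
  have e4 : u 2 = lam * u 4 := by have := e 4; rwa [show d⁻¹ (4:Fin 5) = 2 by decide] at this
  have f3 : u 3 = lam * u 1 := e1
  have f4 : u 4 = lam ^ 2 * u 1 := by rw [e3, f3]; ring
  have f2 : u 2 = lam ^ 3 * u 1 := by rw [e4, f4]; ring
  have hu1 : u 1 ≠ 0 := by
    intro h0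
    have z3 : u 3 = 0 := by rw [f3, h0]; ring
    have z4 : u 4 = 0 := by rw [f4, h0]; ring
    have z2 : u 2 = 0 := by rw [f2, h0]; ring
    have z0 : u 0 = 0 := by
      rw [Fin.sum_univ_five, h0, z2, z3, z4] at h1
      linear_combination h1
    apply hu
    funext i
    fin_cases i <;> simp only [Pi.zero_apply] <;> assumption
  have h4 : lam ^ 4 = 1 := by
    have hx : (lam ^ 4 - 1) * u 1 = 0 := by linear_combination -e2 - lam * f2
    rcases mul_eq_zero.mp hx with hx | hx
    · exact sub_eq_zero.mp hx
    · exact absurd hx hu1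
  have hl1 : lam ≠ 1 := by
    rintro rfl
    rw [one_mul] at f3
    rw [one_pow, one_mul] at f4 f2
    have h50 : u 0 = -4 * u 1 := by
      rw [Fin.sum_univ_five, f2, f3, f4] at h1
      linear_combination h1
    rw [Fin.sum_univ_five, f2, f3, f4, h50] at h3
    have hm : (-60 : ℂ) * (u 1) ^ 3 = 0 := by linear_combination h3
    have hcube : (u 1) ^ 3 = 0 := by linear_combination -(1/60 : ℂ) * hm
    exact hu1 (pow_eq_zero_iff (by norm_num)|>.mp hcube)
  have hu0 : u 0 = 0 := by
    have hz : (1 - lam) * u 0 = 0 := by linear_combination e0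
    rcases mul_eq_zero.mp hz with hx | hx
    · exact absurd (by linear_combination -hx) hl1
    · exact hx
  have hfac : (lam + 1) * (lam - Complex.I) * (lam + Complex.I) * (lam - 1) = 0 := by
    linear_combination h4 + (1 - lam ^ 2) * Complex.I_sq
  rcases mul_eq_zero.mp hfac with hx | hx
  swap
  · exact absurd (by linear_combination hx) hl1
  rcases mul_eq_zero.mp hx with hx | hx
  rcases mul_eq_zero.mp hx with hx | hx
  · -- lam = -1, m = 0
    have hl : lam = -1 := by linear_combination hx
    subst hl
    refine ⟨0, -u 1, neg_ne_zero.mpr hu1, ?_⟩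
    funext i
    fin_cases i <;> simp only [Pi.smul_apply, smul_eq_mul]
    · show u 0 = -u 1 * (0:ℂ); rw [hu0]; ring
    · show u 1 = -u 1 * (-1:ℂ); ring
    · show u 2 = -u 1 * (1:ℂ); rw [f2]; ring
    · show u 3 = -u 1 * (1:ℂ); rw [f3]; ring
    · show u 4 = -u 1 * (-1:ℂ); rw [f4]; ring
  · -- lam = I, m = 1
    have hl : lam = Complex.I := by linear_combination hx
    subst hl
    refine ⟨1, Complex.I * u 1, mul_ne_zero Complex.I_ne_zero hu1, ?_⟩
    funext i
    fin_cases i <;> simp only [Pi.smul_apply, smul_eq_mul]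
    · show u 0 = Complex.I * u 1 * (0:ℂ); rw [hu0]; ring
    · show u 1 = Complex.I * u 1 * (-Complex.I)
      linear_combination (u 1) * Complex.I_sq
    · show u 2 = Complex.I * u 1 * (-1:ℂ)
      rw [f2]; linear_combination (Complex.I * u 1) * Complex.I_sq
    · show u 3 = Complex.I * u 1 * (1:ℂ); rw [f3]; ring
    · show u 4 = Complex.I * u 1 * Complex.I; rw [f4]; ring
  · -- lam = -I, m = 2
    have hl : lam = -Complex.I := by linear_combination hx
    subst hl
    refine ⟨2, -(Complex.I * u 1), neg_ne_zero.mpr (mul_ne_zero Complex.I_ne_zero hu1), ?_⟩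
    funext i
    fin_cases i <;> simp only [Pi.smul_apply, smul_eq_mul]
    · show u 0 = -(Complex.I * u 1) * (0:ℂ); rw [hu0]; ring
    · show u 1 = -(Complex.I * u 1) * Complex.I
      linear_combination (u 1) * Complex.I_sq
    · show u 2 = -(Complex.I * u 1) * (-1:ℂ)
      rw [f2]; linear_combination -(Complex.I * u 1) * Complex.I_sq
    · show u 3 = -(Complex.I * u 1) * (1:ℂ); rw [f3]; ring
    · show u 4 = -(Complex.I * u 1) * (-Complex.I); rw [f4]; ring

lemma c_mem : c ∈ G₂₀ := Subgroup.subset_closure (by simp)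

lemma d_mem : d ∈ G₂₀ := Subgroup.subset_closure (by simp)

lemma glist_mem (a : Fin 8) : glist a ∈ G₂₀ := by
  fin_cases a
  · exact one_mem _
  · exact c_mem
  · exact pow_mem c_mem 2
  · exact pow_mem c_mem 3
  · exact pow_mem c_mem 4
  · exact d_mem
  · exact mul_mem c_mem d_mem
  · exact mul_mem (pow_mem c_mem 2) d_mem

set_option maxRecDepth 4000 in
lemma pow_aux : (c^(1:ℕ))^1 = c ∧ (c^(2:ℕ))^3 = c ∧ (c^(3:ℕ))^2 = c ∧ (c^(4:ℕ))^4 = c ∧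
    (d^(1:ℕ))^1 = d ∧ (d^(3:ℕ))^3 = d := by
  refine ⟨by decide, by decide, by decide, by decide, by decide, by decide⟩

theorem stmt6 (ζ : ℂ) (hζ : IsPrimitiveRoot ζ 5) (v : Fin 5 → ℂ) (hv : v ≠ 0)
    (h1 : (∑ i, v i) = 0) (h3 : (∑ i, (v i) ^ 3) = 0)
    (hsmall : ¬ ∃ w : Fin 8 → Fin 5 → ℂ,
      (∀ a, ∃ g ∈ G₂₀, w a = permSMul g v) ∧
      (∀ a b, a ≠ b → ¬ ∃ lam : ℂ, w a = lam • w b)) :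
    (∃ k ∈ Finset.Icc 1 4, ∃ μ : ℂ, μ ≠ 0 ∧ v = μ • P ζ k) ∨
    (∃ j : Fin 5, ∃ m : Fin 3, ∃ μ : ℂ, μ ≠ 0 ∧
      v = μ • permSMul (c ^ (j : ℕ)) (R m)) := by
  have key : ∃ a b : Fin 8, a ≠ b ∧ ∃ lam : ℂ,
      permSMul (glist a) v = lam • permSMul (glist b) v := by
    by_contra hno
    push_neg at hno
    exact hsmall ⟨fun a => permSMul (glist a) v, fun a => ⟨glist a, glist_mem a, rfl⟩,
      fun a b hab hex => hex.elim (fun lam hl => hno a b hab lam hl)⟩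
  obtain ⟨a, b, hab, lam, hl⟩ := key
  have hgv : permSMul ((glist b)⁻¹ * glist a) v = lam • v := by
    rw [pS_mul, hl, pS_smul, ← pS_mul, inv_mul_cancel, pS_one]
  rcases bad_quot a b hab with ⟨k, hk0, hkg⟩ | ⟨i, e, hge⟩
  · -- g is a nontrivial power of c
    rw [hkg] at hgv
    left
    have hn : ∃ n : ℕ, (c ^ (k : ℕ)) ^ n = c := by
      fin_cases k
      · exact absurd rfl hk0
      · exact ⟨1, pow_aux.1⟩
      · exact ⟨3, pow_aux.2.1⟩
      · exact ⟨2, pow_aux.2.2.1⟩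
      · exact ⟨4, pow_aux.2.2.2.1⟩
    obtain ⟨n, hn⟩ := hn
    have h2 := pS_pow_eigen _ v lam hgv n
    rw [hn] at h2
    exact eigen_c ζ hζ v hv h1 _ h2
  · -- g = c^i * d^(2e+1), an element of order 4
    rw [hge] at hgv
    obtain ⟨t, ht⟩ := conj_exists i e
    rw [ht] at hgv
    set u := permSMul (c ^ (t : ℕ))⁻¹ v with hu_def
    have hvu : v = permSMul (c ^ (t : ℕ)) u := by
      rw [hu_def, ← pS_mul, mul_inv_cancel, pS_one]
    have hdu : permSMul (d ^ (2 * (e : ℕ) + 1)) u = lam • u := by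
      have h2 := congrArg (permSMul (c ^ (t : ℕ))⁻¹) hgv
      rw [← pS_mul, pS_smul] at h2
      rw [show (c ^ (t : ℕ))⁻¹ * (c ^ (t : ℕ) * d ^ (2 * (e : ℕ) + 1) * (c ^ (t : ℕ))⁻¹)
          = d ^ (2 * (e : ℕ) + 1) * (c ^ (t : ℕ))⁻¹ by group] at h2
      rw [pS_mul] at h2
      exact h2
    have hn : ∃ n : ℕ, (d ^ (2 * (e : ℕ) + 1)) ^ n = d := by
      fin_cases e
      · exact ⟨1, pow_aux.2.2.2.2.1⟩
      · exact ⟨3, pow_aux.2.2.2.2.2⟩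
    obtain ⟨n, hn⟩ := hn
    have hdn := pS_pow_eigen _ u lam hdu n
    rw [hn] at hdn
    have hu_ne : u ≠ 0 := by
      intro h0
      apply hv
      rw [hvu, h0]
      funext i
      simp [permSMul]
    have hsum : ∀ n : ℕ, (∑ i, (u i) ^ n) = ∑ i, (v i) ^ n := by
      intro n
      rw [hu_def]
      calc ∑ i, (permSMul (c ^ (t : ℕ))⁻¹ v i) ^ n
          = ∑ i, (v ((c ^ (t : ℕ)) i)) ^ n :=
            Finset.sum_congr rfl (fun i _ => by simp [permSMul])
        _ = ∑ i, (v i) ^ n := Equiv.sum_comp _ (fun j => (v j) ^ n)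
    have h1u : (∑ i, u i) = 0 := by
      have := (hsum 1).trans (by simpa using h1)
      simpa using this
    have h3u : (∑ i, (u i) ^ 3) = 0 := (hsum 3).trans h3
    obtain ⟨m, μ, hμ, hum⟩ := eigen_d u hu_ne h1u h3u _ hdn
    right
    exact ⟨t, m, μ, hμ, by rw [hvu, hum, pS_smul]⟩
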